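/- arXiv:2409.14809 — 2 statements merged into one kernel-verified Lean document; each statement's English description precedes it below -/
import Mathlib

section
/- If a linear cocycle 𝒜 admits a tempered exponential dichotomy, then there exists a tempered random variable C : Ω → (0,∞) such that the pair (L^∞_C(Ω,X), L^∞(Ω,X)) is admissible for 𝒜: for each g ∈ L^∞(Ω,X) there exists a unique f ∈ L^∞_C(Ω,X) with f(ω) − A(σ^{-1}ω) f(σ^{-1}ω) = g(ω) for ℙ-a.e. ω. -/
open MeasureTheory Filter

/-- `𝒜` is a linear cocycle over `σ`. -/
def IsCocycle {Ω X : Type*} [NormedAddCommGroup X] [NormedSpace ℝ X]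
    (σ : Ω → Ω) (𝒜 : Ω → ℕ → X →L[ℝ] X) : Prop :=
  (∀ ω, 𝒜 ω 0 = ContinuousLinearMap.id ℝ X) ∧
    ∀ ω (m n : ℕ), 𝒜 ω (n + m) = (𝒜 (σ^[m] ω) n).comp (𝒜 ω m)

/-- A tempered exponential dichotomy for the cocycle `𝒜` over the invertible system
`σ`: measurable equivariant projections `P` (stable) with complement `Id - P`
(unstable), a backwards cocycle `B ω n` (the inverse `𝒜(ω, -n)` of `𝒜(σ^{-n}ω, n)`
restricted to the unstable direction), a tempered random variable `K > 0` and a rate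
`lam > 0` realizing the exponential bounds. -/
structure Dichotomy {Ω X : Type*} [MeasurableSpace Ω]
    [NormedAddCommGroup X] [NormedSpace ℝ X] [MeasurableSpace X] [BorelSpace X]
    (μ : Measure Ω) (σ : Ω ≃ᵐ Ω) (𝒜 : Ω → ℕ → X →L[ℝ] X) where
  P : Ω → X →L[ℝ] X
  B : Ω → ℕ → X →L[ℝ] X
  K : Ω → ℝ
  lam : ℝ
  lam_pos : 0 < lam
  K_pos : ∀ ω, 0 < K ω
  K_meas : Measurable K
  tempered_pos : ∀ᵐ ω ∂μ,
    Tendsto (fun n : ℕ => Real.log (K (σ^[n] ω)) / (n : ℝ)) atTop (nhds 0)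
  tempered_neg : ∀ᵐ ω ∂μ,
    Tendsto (fun n : ℕ => Real.log (K (σ.symm^[n] ω)) / (n : ℝ)) atTop (nhds 0)
  idem : ∀ ω, (P ω).comp (P ω) = P ω
  P_meas : ∀ x : X, Measurable fun ω => P ω x
  equivar : ∀ ω, (P (σ ω)).comp (𝒜 ω 1) = (𝒜 ω 1).comp (P ω)
  inv_right : ∀ ω (n : ℕ),
    (𝒜 (σ.symm^[n] ω) n).comp ((B ω n).comp (ContinuousLinearMap.id ℝ X - P ω)) =
      ContinuousLinearMap.id ℝ X - P ω
  inv_left : ∀ ω (n : ℕ),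
    (B ω n).comp ((𝒜 (σ.symm^[n] ω) n).comp
        (ContinuousLinearMap.id ℝ X - P (σ.symm^[n] ω))) =
      ContinuousLinearMap.id ℝ X - P (σ.symm^[n] ω)
  B_ker : ∀ ω (n : ℕ),
    (P (σ.symm^[n] ω)).comp ((B ω n).comp (ContinuousLinearMap.id ℝ X - P ω)) = 0
  bound_s : ∀ᵐ ω ∂μ, ∀ n : ℕ,
    ‖(𝒜 ω n).comp (P ω)‖ ≤ K ω * Real.exp (-lam * n)
  bound_u : ∀ᵐ ω ∂μ, ∀ n : ℕ,
    ‖(B ω n).comp (ContinuousLinearMap.id ℝ X - P ω)‖ ≤ K ω * Real.exp (-lam * n)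

/-- Membership in the weighted space `L^∞_C(Ω, X)`: measurable with
`esssup C(ω)‖f(ω)‖ < ∞`. -/
def MemLinfW {Ω X : Type*} [MeasurableSpace Ω] [NormedAddCommGroup X]
    [MeasurableSpace X] (μ : MeasureTheory.Measure Ω) (C : Ω → ℝ) (f : Ω → X) : Prop :=
  Measurable f ∧ ∃ M : ℝ, ∀ᵐ ω ∂μ, C ω * ‖f ω‖ ≤ M

/-- The pair `(L^∞_{C₁}, L^∞_{C₂})` is admissible for the cocycle with generator `A`:
for every `g ∈ L^∞_{C₂}` there is an (a.e.-essentially) unique `f ∈ L^∞_{C₁}` with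
`f(ω) − A(σ^{-1}ω) f(σ^{-1}ω) = g(ω)` a.e. -/
def Admissible {Ω X : Type*} [MeasurableSpace Ω] [NormedAddCommGroup X]
    [NormedSpace ℝ X] [MeasurableSpace X] (μ : MeasureTheory.Measure Ω) (σ : Ω ≃ᵐ Ω)
    (A : Ω → X →L[ℝ] X) (C₁ C₂ : Ω → ℝ) : Prop :=
  ∀ g : Ω → X, MemLinfW μ C₂ g →
    ∃ f : Ω → X,
      (MemLinfW μ C₁ f ∧ ∀ᵐ ω ∂μ, f ω - A (σ.symm ω) (f (σ.symm ω)) = g ω) ∧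
      ∀ f' : Ω → X,
        (MemLinfW μ C₁ f' ∧ ∀ᵐ ω ∂μ, f' ω - A (σ.symm ω) (f' (σ.symm ω)) = g ω) →
        f' =ᵐ[μ] f

/-- A positive random variable `K` is tempered:
`(1/n) log K(σ^{±n} ω) → 0` almost surely. -/
def Tempered {Ω : Type*} [MeasurableSpace Ω] (μ : MeasureTheory.Measure Ω)
    (σ : Ω ≃ᵐ Ω) (K : Ω → ℝ) : Prop :=
  ∀ᵐ ω ∂μ,
    Filter.Tendsto (fun n : ℕ => Real.log (K (σ^[n] ω)) / (n : ℝ))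
      Filter.atTop (nhds 0) ∧
    Filter.Tendsto (fun n : ℕ => Real.log (K (σ.symm^[n] ω)) / (n : ℝ))
      Filter.atTop (nhds 0)

/-!
Tempering: `K_ε(ω) = max 1 (sup_k K(σᵏω) e^{-ε|k|})` is tempered, dominates `K`, and satisfies
`K(σᵏω) ≤ K_ε(ω) e^{ε|k|}` and `K_ε(σᵏω) ≤ e^{ε|k|} K_ε(ω)`; take `ε = λ/3` and `C = 1/K_ε`.

Existence: `f(ω) = ∑_{n ≥ 0} 𝒜(σ⁻ⁿω, n) P g(σ⁻ⁿω) - ∑_{n ≥ 1} 𝒜(σⁿω, -n) Q g(σⁿω)` solves the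
equation, and its `n`-th terms are bounded by `K_ε(ω) ‖g‖_∞ e^{(ε-λ)n}`.

Uniqueness: if `h = 𝒜 h ∘ σ⁻¹` and `‖h‖ ≤ M K_ε`, then transporting the stable part of `h(ω)`
forwards from `σ⁻ⁿω` and the unstable part backwards from `σⁿω` gives
`‖h(ω)‖ ≤ 2 M K_ε(ω)² e^{(2ε-λ)n}` for every `n`, hence `h = 0`.
-/

open Real Function

namespace MeasurableEquiv

variable {Ω : Type*} [MeasurableSpace Ω] (σ : Ω ≃ᵐ Ω)

def orbit (ω : Ω) (k : ℤ) : Ω := (σ.toEquiv ^ k) ω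

@[simp] lemma orbit_natCast (ω : Ω) (n : ℕ) : σ.orbit ω n = σ^[n] ω := by
  simp [orbit, ← Equiv.Perm.iterate_eq_pow]

@[simp] lemma orbit_neg_natCast (ω : Ω) (n : ℕ) : σ.orbit ω (-n) = σ.symm^[n] ω := by
  rw [orbit, zpow_neg, zpow_natCast, ← inv_pow, ← Equiv.Perm.iterate_eq_pow]
  rfl

@[simp] lemma symm_iterate_iterate (n : ℕ) (ω : Ω) : σ.symm^[n] (σ^[n] ω) = ω :=
  (LeftInverse.iterate σ.symm_apply_apply n) ω

@[simp] lemma iterate_symm_iterate (n : ℕ) (ω : Ω) : σ^[n] (σ.symm^[n] ω) = ω :=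
  (LeftInverse.iterate σ.apply_symm_apply n) ω

@[simp] lemma orbit_zero (ω : Ω) : σ.orbit ω 0 = ω := rfl

@[simp] lemma orbit_neg_one (ω : Ω) : σ.orbit ω (-1) = σ.symm ω := by
  simpa using σ.orbit_neg_natCast ω 1

lemma orbit_orbit (ω : Ω) (j k : ℤ) : σ.orbit (σ.orbit ω j) k = σ.orbit ω (k + j) := by
  simp [orbit, zpow_add, Equiv.Perm.mul_apply]

lemma forall_orbit_orbit {p : Ω → Prop} {ω : Ω} (h : ∀ k, p (σ.orbit ω k)) (j : ℤ) :
    ∀ k, p (σ.orbit (σ.orbit ω j) k) := fun k => by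
  simpa [orbit_orbit] using h (k + j)

lemma measurable_orbit (k : ℤ) : Measurable fun ω => σ.orbit ω k := by
  obtain ⟨n, rfl | rfl⟩ := Int.eq_nat_or_neg k
  · simpa using σ.measurable.iterate n
  · simpa using σ.symm.measurable.iterate n

lemma ae_forall_orbit {μ : Measure Ω} (hσ : MeasurePreserving σ μ μ) {p : Ω → Prop}
    (h : ∀ᵐ ω ∂μ, p ω) : ∀ᵐ ω ∂μ, ∀ k, p (σ.orbit ω k) := by
  refine ae_all_iff.2 fun k => ?_
  obtain ⟨n, rfl | rfl⟩ := Int.eq_nat_or_neg k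
  · simpa using (hσ.iterate n).quasiMeasurePreserving.ae h
  · simpa using ((hσ.symm σ).iterate n).quasiMeasurePreserving.ae h

end MeasurableEquiv

lemma exists_le_mul_exp_of_tendsto_log_div {a : ℕ → ℝ} (ha : ∀ n, 0 < a n)
    (h : Tendsto (fun n : ℕ => log (a n) / n) atTop (nhds 0)) {δ : ℝ} (hδ : 0 < δ) :
    ∃ c, ∀ n : ℕ, a n ≤ c * exp (δ * n) := by
  have hdecay : Tendsto (fun n : ℕ => a n * exp (-(δ * n))) atTop (nhds 0) := by
    have : Tendsto (fun n : ℕ => (log (a n) / n - δ) * n) atTop atBot :=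
      Tendsto.neg_mul_atTop (by linarith : -δ < 0) (by simpa using h.sub_const δ)
        tendsto_natCast_atTop_atTop
    refine (tendsto_exp_atBot.comp this).congr' ?_
    filter_upwards [eventually_ne_atTop 0] with n hn
    rw [comp_apply, sub_mul, div_mul_cancel₀ _ (Nat.cast_ne_zero.2 hn), sub_eq_add_neg,
      exp_add, exp_log (ha n)]
  obtain ⟨c, hc⟩ := hdecay.bddAbove_range
  refine ⟨c, fun n => ?_⟩
  calc a n = a n * exp (-(δ * n)) * exp (δ * n) := by rw [mul_assoc, ← exp_add]; simp
    _ ≤ c * exp (δ * n) := by gcongr; exact hc (Set.mem_range_self n)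

lemma tendsto_log_div_of_le_mul_exp {a : ℕ → ℝ} (ha : ∀ n, 1 ≤ a n)
    (h : ∀ δ > 0, ∃ c, ∀ n : ℕ, a n ≤ c * exp (δ * n)) :
    Tendsto (fun n : ℕ => log (a n) / n) atTop (nhds 0) := by
  refine tendsto_order.2 ⟨fun b hb => Eventually.of_forall fun n => ?_, fun b hb => ?_⟩
  · exact hb.trans_le (div_nonneg (log_nonneg (ha n)) n.cast_nonneg)
  obtain ⟨c, hc⟩ := h (b / 2) (by positivity)
  have hc0 : 0 < c := by
    have := (ha 0).trans (hc 0)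
    simp only [CharP.cast_eq_zero, mul_zero, exp_zero, mul_one] at this
    linarith
  have hlogc : ∀ᶠ n : ℕ in atTop, log c / n < b / 2 :=
    (tendsto_const_div_atTop_nhds_zero_nat (log c)).eventually (gt_mem_nhds (by positivity))
  filter_upwards [hlogc, eventually_gt_atTop 0] with n hn hpos
  have hn' : (0 : ℝ) < n := Nat.cast_pos.2 hpos
  have hlog : log (a n) ≤ log c + b / 2 * n := by
    simpa [log_mul hc0.ne' (exp_pos _).ne'] using
      log_le_log (by linarith [ha n]) (hc n)
  calc log (a n) / n ≤ (log c + b / 2 * n) / n := by gcongr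
    _ = log c / n + b / 2 := by field_simp
    _ < b := by linarith

section Tempering

open scoped ENNReal

variable {Ω : Type*} [MeasurableSpace Ω] {σ : Ω ≃ᵐ Ω} {K : Ω → ℝ} {ε : ℝ} {ω : Ω}

noncomputable def temperingEnvelope (σ : Ω ≃ᵐ Ω) (K : Ω → ℝ) (ε : ℝ) (ω : Ω) : ℝ≥0∞ :=
  ⨆ k : ℤ, ENNReal.ofReal (K (σ.orbit ω k) * exp (-(ε * k.natAbs)))

/-- The random variable `K_ε` of the tempering lemma; the `max 1` also guards against the junk
value `⊤.toReal = 0`. -/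
noncomputable def temperedMajorant (σ : Ω ≃ᵐ Ω) (K : Ω → ℝ) (ε : ℝ) (ω : Ω) : ℝ :=
  max 1 (temperingEnvelope σ K ε ω).toReal

lemma one_le_temperedMajorant : 1 ≤ temperedMajorant σ K ε ω := le_max_left _ _

lemma measurable_temperedMajorant (hK : Measurable K) :
    Measurable (temperedMajorant σ K ε) :=
  measurable_const.max <| Measurable.ennreal_toReal <| Measurable.iSup fun k =>
    ENNReal.measurable_ofReal.comp <| (hK.comp (σ.measurable_orbit k)).mul_const _

lemma le_temperedMajorant_mul_exp (hω : temperingEnvelope σ K ε ω ≠ ⊤) (k : ℤ) :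
    K (σ.orbit ω k) ≤ temperedMajorant σ K ε ω * exp (ε * k.natAbs) := by
  have hle : K (σ.orbit ω k) * exp (-(ε * k.natAbs)) ≤ temperedMajorant σ K ε ω :=
    ((ENNReal.ofReal_le_iff_le_toReal hω).1 <| le_iSup (fun k : ℤ =>
      ENNReal.ofReal (K (σ.orbit ω k) * exp (-(ε * k.natAbs)))) k).trans (le_max_right _ _)
  calc K (σ.orbit ω k) = K (σ.orbit ω k) * exp (-(ε * k.natAbs)) * exp (ε * k.natAbs) := by
        rw [mul_assoc, ← exp_add]; simp
    _ ≤ temperedMajorant σ K ε ω * exp (ε * k.natAbs) := by gcongr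

lemma temperingEnvelope_orbit_le {c δ : ℝ} (hc : 0 ≤ c) (hδ : 0 ≤ δ) (hδε : δ ≤ ε)
    (h : ∀ k : ℤ, K (σ.orbit ω k) ≤ c * exp (δ * k.natAbs)) (j : ℤ) :
    temperingEnvelope σ K ε (σ.orbit ω j) ≤ ENNReal.ofReal (c * exp (δ * j.natAbs)) := by
  refine iSup_le fun k => ENNReal.ofReal_le_ofReal ?_
  have htri : ((k + j).natAbs : ℝ) ≤ k.natAbs + j.natAbs := by
    exact_mod_cast Int.natAbs_add_le k j
  rw [σ.orbit_orbit]
  calc K (σ.orbit ω (k + j)) * exp (-(ε * k.natAbs))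
      ≤ c * exp (δ * (k + j).natAbs) * exp (-(ε * k.natAbs)) := by gcongr; exact h _
    _ = c * exp (δ * (k + j).natAbs - ε * k.natAbs) := by
        rw [mul_assoc, ← exp_add, sub_eq_add_neg]
    _ ≤ c * exp (δ * j.natAbs) := by
        gcongr
        nlinarith [(k.natAbs.cast_nonneg : (0 : ℝ) ≤ k.natAbs)]

lemma temperedMajorant_orbit_le {c δ : ℝ} (hc : 1 ≤ c) (hδ : 0 ≤ δ) (hδε : δ ≤ ε)
    (h : ∀ k : ℤ, K (σ.orbit ω k) ≤ c * exp (δ * k.natAbs)) (j : ℤ) :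
    temperedMajorant σ K ε (σ.orbit ω j) ≤ c * exp (δ * j.natAbs) := by
  have hone : 1 ≤ c * exp (δ * j.natAbs) :=
    one_le_mul_of_one_le_of_one_le hc (one_le_exp (by positivity))
  exact max_le hone <| ENNReal.toReal_le_of_le_ofReal (by linarith) <|
    temperingEnvelope_orbit_le (by linarith) hδ hδε h j

lemma exists_le_mul_exp_natAbs (hK : ∀ ω, 0 < K ω)
    (hf : Tendsto (fun n : ℕ => log (K (σ^[n] ω)) / n) atTop (nhds 0))
    (hb : Tendsto (fun n : ℕ => log (K (σ.symm^[n] ω)) / n) atTop (nhds 0))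
    {δ : ℝ} (hδ : 0 < δ) : ∃ c, 1 ≤ c ∧ ∀ k : ℤ, K (σ.orbit ω k) ≤ c * exp (δ * k.natAbs) := by
  obtain ⟨cf, hcf⟩ := exists_le_mul_exp_of_tendsto_log_div (fun _ => hK _) hf hδ
  obtain ⟨cb, hcb⟩ := exists_le_mul_exp_of_tendsto_log_div (fun _ => hK _) hb hδ
  refine ⟨max 1 (max cf cb), le_max_left _ _, fun k => ?_⟩
  obtain ⟨n, rfl | rfl⟩ := Int.eq_nat_or_neg k
  · simpa using (hcf n).trans (by gcongr; exact (le_max_left _ _).trans (le_max_right _ _))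
  · simpa using (hcb n).trans (by gcongr; exact (le_max_right _ _).trans (le_max_right _ _))

lemma tempered_of_forall_le_mul_exp {μ : Measure Ω} {W : Ω → ℝ} (hW : ∀ ω, 1 ≤ W ω)
    (h : ∀ᵐ ω ∂μ, ∀ δ > 0, ∃ c, ∀ k : ℤ, W (σ.orbit ω k) ≤ c * exp (δ * k.natAbs)) :
    Tempered μ σ W := by
  filter_upwards [h] with ω hω
  refine ⟨tendsto_log_div_of_le_mul_exp (fun _ => hW _) fun δ hδ => ?_,
    tendsto_log_div_of_le_mul_exp (fun _ => hW _) fun δ hδ => ?_⟩ <;>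
    obtain ⟨c, hc⟩ := hω δ hδ
  · exact ⟨c, fun n => by simpa using hc n⟩
  · exact ⟨c, fun n => by simpa using hc (-n)⟩

theorem exists_tempered_majorant {μ : Measure Ω} (hK : ∀ ω, 0 < K ω) (hKm : Measurable K)
    (htemp : Tempered μ σ K) (hε : 0 < ε) :
    ∃ W : Ω → ℝ, Measurable W ∧ (∀ ω, 1 ≤ W ω) ∧ Tempered μ σ W ∧
      ∀ᵐ ω ∂μ, ∀ k : ℤ, K (σ.orbit ω k) ≤ W ω * exp (ε * k.natAbs) ∧
        W (σ.orbit ω k) ≤ exp (ε * k.natAbs) * W ω := by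
  refine ⟨temperedMajorant σ K ε, measurable_temperedMajorant hKm,
    fun _ => one_le_temperedMajorant, tempered_of_forall_le_mul_exp
    (fun _ => one_le_temperedMajorant) ?_, ?_⟩ <;>
    filter_upwards [htemp] with ω ⟨hf, hb⟩
  · intro δ' hδ'
    obtain ⟨c, hc, hKc⟩ := exists_le_mul_exp_natAbs hK hf hb (lt_min hδ' hε)
    refine ⟨c, fun j => (temperedMajorant_orbit_le hc (by positivity) (min_le_right _ _)
      hKc j).trans ?_⟩
    gcongr
    exact min_le_left _ _
  · obtain ⟨c, hc, hKc⟩ := exists_le_mul_exp_natAbs hK hf hb hε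
    have hfin : temperingEnvelope σ K ε ω ≠ ⊤ := by
      simpa using ne_top_of_le_ne_top ENNReal.ofReal_ne_top
        (temperingEnvelope_orbit_le (by linarith) hε.le le_rfl hKc 0)
    have hbound := le_temperedMajorant_mul_exp hfin
    exact fun k => ⟨hbound k, by
      simpa [mul_comm] using
        temperedMajorant_orbit_le one_le_temperedMajorant hε.le le_rfl hbound k⟩

end Tempering

lemma Tempered.inv {Ω : Type*} [MeasurableSpace Ω] {μ : Measure Ω} {σ : Ω ≃ᵐ Ω} {W : Ω → ℝ}
    (h : Tempered μ σ W) : Tempered μ σ fun ω => (W ω)⁻¹ := by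
  filter_upwards [h] with ω ⟨h₁, h₂⟩
  simp only [log_inv, neg_div]
  exact ⟨by simpa using h₁.neg, by simpa using h₂.neg⟩

lemma memLinfW_inv_iff {Ω X : Type*} [MeasurableSpace Ω] [NormedAddCommGroup X]
    [MeasurableSpace X] {μ : Measure Ω} {W : Ω → ℝ} (hW : ∀ᵐ ω ∂μ, 0 < W ω) {f : Ω → X} :
    MemLinfW μ (fun ω => (W ω)⁻¹) f ↔ Measurable f ∧ ∃ M, ∀ᵐ ω ∂μ, ‖f ω‖ ≤ W ω * M :=
  and_congr_right fun _ => exists_congr fun _ =>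
    eventually_congr (hW.mono fun _ hω => inv_mul_le_iff₀ hω)

section Measurability

variable {Ω X Y : Type*} [MeasurableSpace Ω]

lemma measurable_apply_of_continuous_of_measurable [TopologicalSpace X]
    [TopologicalSpace.MetrizableSpace X] [MeasurableSpace X] [SecondCountableTopology X]
    [OpensMeasurableSpace X] [TopologicalSpace Y] [TopologicalSpace.PseudoMetrizableSpace Y]
    [MeasurableSpace Y] [BorelSpace Y] {u : Ω → X → Y} (hcont : ∀ ω, Continuous (u ω))
    (hmeas : ∀ x, Measurable fun ω => u ω x) {h : Ω → X} (hh : Measurable h) :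
    Measurable fun ω => u ω (h ω) :=
  (measurable_uncurry_of_continuous_of_measurable (u := fun x ω => u ω x) hcont hmeas).comp
    (hh.prodMk measurable_id)

/-- `u ω` is the limit of the first term of a dense sequence that `T ω` maps within `1/(m+1)`
of `v ω`. -/
lemma measurable_of_apply_eq_of_antilipschitz [MetricSpace X] [TopologicalSpace.SeparableSpace X]
    [MeasurableSpace X] [BorelSpace X] [PseudoMetricSpace Y] [SecondCountableTopology Y]
    [MeasurableSpace Y] [BorelSpace Y] {T : Ω → X → Y} (hcont : ∀ ω, Continuous (T ω))
    (hT : ∀ x, Measurable fun ω => T ω x) (hanti : ∀ ω, ∃ K, AntilipschitzWith K (T ω))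
    {u : Ω → X} {v : Ω → Y} (hv : Measurable v) (huv : ∀ ω, T ω (u ω) = v ω) :
    Measurable u := by
  classical
  rcases isEmpty_or_nonempty X with hX | hX
  · exact measurable_of_subsingleton_codomain u
  set d := TopologicalSpace.denseSeq X
  have hex : ∀ (m : ℕ) ω, ∃ k, dist (T ω (d k)) (v ω) < 1 / (m + 1) := fun m ω =>
    (TopologicalSpace.denseRange_denseSeq X).exists_mem_open
      (isOpen_lt ((hcont ω).dist continuous_const) continuous_const)
      ⟨u ω, by simp only [Set.mem_ofPred_eq, huv, dist_self]; positivity⟩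
  have hsel : ∀ m, Measurable fun ω => d (Nat.find (hex m ω)) := fun m =>
    measurable_from_top.comp <| measurable_find (hex m) fun k =>
      measurableSet_lt ((hT _).dist hv) measurable_const
  refine measurable_of_tendsto_metrizable hsel (tendsto_pi_nhds.2 fun ω => ?_)
  obtain ⟨K, hK⟩ := hanti ω
  have hlim := (tendsto_one_div_add_atTop_nhds_zero_nat (𝕜 := ℝ)).const_mul (K : ℝ)
  rw [mul_zero] at hlim
  refine tendsto_iff_dist_tendsto_zero.2 (squeeze_zero (fun _ => dist_nonneg) (fun m => ?_) hlim)
  calc dist (d (Nat.find (hex m ω))) (u ω)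
      ≤ K * dist (T ω (d (Nat.find (hex m ω)))) (T ω (u ω)) := hK.le_mul_dist _ _
    _ ≤ K * (1 / (m + 1)) := by rw [huv]; gcongr; exact (Nat.find_spec (hex m ω)).le

end Measurability

lemma ContinuousLinearMap.norm_apply_le_mul_exp_pow {E F : Type*} [SeminormedAddCommGroup E]
    [NormedSpace ℝ E] [SeminormedAddCommGroup F] [NormedSpace ℝ F] {L : E →L[ℝ] F}
    {a w ε l : ℝ} {n : ℕ} (hL : ‖L‖ ≤ a * exp (-l * n)) (ha : a ≤ w * exp (ε * n)) (x : E) :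
    ‖L x‖ ≤ w * exp (ε - l) ^ n * ‖x‖ := by
  refine L.le_of_opNorm_le (hL.trans ?_) x
  calc a * exp (-l * n) ≤ w * exp (ε * n) * exp (-l * n) := by gcongr
    _ = w * exp (ε - l) ^ n := by
        rw [mul_assoc, ← exp_add, ← exp_nat_mul]; congr 2; ring

namespace IsCocycle

variable {Ω X : Type*} [NormedAddCommGroup X] [NormedSpace ℝ X] {σ : Ω → Ω}
  {𝒜 : Ω → ℕ → X →L[ℝ] X}

lemma apply_zero (hcoc : IsCocycle σ 𝒜) (ω : Ω) (x : X) : 𝒜 ω 0 x = x := by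
  rw [hcoc.1]; rfl

lemma apply_succ (hcoc : IsCocycle σ 𝒜) (ω : Ω) (n : ℕ) (x : X) :
    𝒜 ω (n + 1) x = 𝒜 (σ^[n] ω) 1 (𝒜 ω n x) := by
  rw [add_comm, hcoc.2 ω n 1]; rfl

lemma apply_succ' (hcoc : IsCocycle σ 𝒜) (ω : Ω) (n : ℕ) (x : X) :
    𝒜 ω (n + 1) x = 𝒜 (σ ω) n (𝒜 ω 1 x) := by
  rw [hcoc.2 ω 1 n]; rfl

lemma iterate_apply_of_forall (hcoc : IsCocycle σ 𝒜) {h : Ω → X} {ω : Ω}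
    (hinv : ∀ k : ℕ, h (σ (σ^[k] ω)) = 𝒜 (σ^[k] ω) 1 (h (σ^[k] ω))) (n : ℕ) :
    h (σ^[n] ω) = 𝒜 ω n (h ω) := by
  induction n with
  | zero => rw [iterate_zero_apply, hcoc.apply_zero]
  | succ n ih => rw [iterate_succ_apply', hinv, ih, ← hcoc.apply_succ]

lemma measurable_apply [MeasurableSpace Ω] [MeasurableSpace X] [BorelSpace X]
    [SecondCountableTopology X] (hcoc : IsCocycle σ 𝒜) (hσ : Measurable σ)
    (hmeas : ∀ x, Measurable fun ω => 𝒜 ω 1 x) (n : ℕ) (x : X) :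
    Measurable fun ω => 𝒜 ω n x := by
  induction n with
  | zero => simp [hcoc.apply_zero]
  | succ n ih =>
    simp only [hcoc.apply_succ _ n]
    exact measurable_apply_of_continuous_of_measurable (u := fun ω => 𝒜 (σ^[n] ω) 1)
      (fun _ => ContinuousLinearMap.continuous _) (fun y => (hmeas y).comp (hσ.iterate n)) ih

end IsCocycle

lemma IsCocycle.iterate_apply_of_forall_orbit {Ω X : Type*} [MeasurableSpace Ω]
    [NormedAddCommGroup X] [NormedSpace ℝ X] {σ : Ω ≃ᵐ Ω} {𝒜 : Ω → ℕ → X →L[ℝ] X}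
    (hcoc : IsCocycle σ 𝒜) {h : Ω → X} {ω : Ω}
    (hinv : ∀ k, h (σ (σ.orbit ω k)) = 𝒜 (σ.orbit ω k) 1 (h (σ.orbit ω k))) (j : ℤ) (n : ℕ) :
    h (σ^[n] (σ.orbit ω j)) = 𝒜 (σ.orbit ω j) n (h (σ.orbit ω j)) :=
  hcoc.iterate_apply_of_forall (fun k => by rw [← σ.orbit_natCast, σ.orbit_orbit]; exact hinv _) n

namespace Dichotomy

variable {Ω X : Type*} [MeasurableSpace Ω] [NormedAddCommGroup X] [NormedSpace ℝ X]
  [MeasurableSpace X] [BorelSpace X] {μ : Measure Ω} {σ : Ω ≃ᵐ Ω} {𝒜 : Ω → ℕ → X →L[ℝ] X}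
  (D : Dichotomy μ σ 𝒜)

def Q (ω : Ω) : X →L[ℝ] X := ContinuousLinearMap.id ℝ X - D.P ω

lemma P_add_Q (ω : Ω) (x : X) : D.P ω x + D.Q ω x = x := by simp [Q]

lemma P_cocycle (hcoc : IsCocycle σ 𝒜) (ω : Ω) (n : ℕ) (x : X) :
    D.P (σ^[n] ω) (𝒜 ω n x) = 𝒜 ω n (D.P ω x) := by
  induction n with
  | zero => simp [hcoc.apply_zero]
  | succ n ih =>
    rw [hcoc.apply_succ, iterate_succ_apply', ← ContinuousLinearMap.comp_apply, D.equivar,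
      ContinuousLinearMap.comp_apply, ih, ← hcoc.apply_succ]

lemma Q_cocycle (hcoc : IsCocycle σ 𝒜) (ω : Ω) (n : ℕ) (x : X) :
    D.Q (σ^[n] ω) (𝒜 ω n x) = 𝒜 ω n (D.Q ω x) := by
  simp [Q, D.P_cocycle hcoc]

lemma cocycle_B (ω : Ω) (n : ℕ) (x : X) :
    𝒜 (σ.symm^[n] ω) n (D.B ω n (D.Q ω x)) = D.Q ω x :=
  congrArg (· x) (D.inv_right ω n)

lemma P_B (ω : Ω) (n : ℕ) (x : X) : D.P (σ.symm^[n] ω) (D.B ω n (D.Q ω x)) = 0 :=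
  congrArg (· x) (D.B_ker ω n)

lemma B_Q_cocycle (hcoc : IsCocycle σ 𝒜) (ω : Ω) (n : ℕ) (x : X) :
    D.B (σ^[n] ω) n (D.Q (σ^[n] ω) (𝒜 ω n x)) = D.Q ω x := by
  have h := congrArg (· x) (D.inv_left (σ^[n] ω) n)
  simp only [σ.symm_iterate_iterate, ContinuousLinearMap.comp_apply] at h
  rw [D.Q_cocycle hcoc]
  exact h

lemma norm_le_P_add_B_Q (hcoc : IsCocycle σ 𝒜) (ω : Ω) (n : ℕ) (x : X) :
    ‖x‖ ≤ ‖D.P ω x‖ + ‖(D.B (σ^[n] ω) n).comp (D.Q (σ^[n] ω))‖ * ‖𝒜 ω n x‖ := by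
  calc ‖x‖ = ‖D.P ω x + D.B (σ^[n] ω) n (D.Q (σ^[n] ω) (𝒜 ω n x))‖ := by
        rw [D.B_Q_cocycle hcoc, D.P_add_Q]
    _ ≤ _ := norm_add_le_of_le le_rfl (((D.B (σ^[n] ω) n).comp (D.Q (σ^[n] ω))).le_opNorm _)

lemma B_zero (hcoc : IsCocycle σ 𝒜) (ω : Ω) (x : X) : D.B ω 0 (D.Q ω x) = D.Q ω x := by
  simpa [hcoc.apply_zero] using D.cocycle_B ω 0 x

lemma cocycle_B_succ (hcoc : IsCocycle σ 𝒜) (ω : Ω) (n : ℕ) (x : X) :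
    𝒜 (σ.symm^[n + 1] ω) 1 (D.B ω (n + 1) (D.Q ω x)) = D.B ω n (D.Q ω x) := by
  set y := 𝒜 (σ.symm^[n + 1] ω) 1 (D.B ω (n + 1) (D.Q ω x))
  have hσ : σ (σ.symm^[n + 1] ω) = σ.symm^[n] ω := by
    rw [iterate_succ_apply', σ.apply_symm_apply]
  have hPy : D.P (σ.symm^[n] ω) y = 0 := by
    have h := congrArg (· (D.B ω (n + 1) (D.Q ω x))) (D.equivar (σ.symm^[n + 1] ω))
    simp only [ContinuousLinearMap.comp_apply] at h
    rw [hσ, D.P_B, map_zero] at h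
    exact h
  have hAy : 𝒜 (σ.symm^[n] ω) n y = D.Q ω x := by
    rw [← hσ, ← hcoc.apply_succ', D.cocycle_B]
  have hQy : D.Q (σ.symm^[n] ω) y = y := by simp [Q, hPy]
  calc y = D.B ω n (𝒜 (σ.symm^[n] ω) n (D.Q (σ.symm^[n] ω) y)) :=
        ((congrArg (· y) (D.inv_left ω n)).trans hQy).symm
    _ = D.B ω n (D.Q ω x) := by rw [hQy, hAy]

def Regular (W : Ω → ℝ) (ε : ℝ) (ω : Ω) : Prop :=
  (∀ n : ℕ, ‖(𝒜 ω n).comp (D.P ω)‖ ≤ D.K ω * exp (-D.lam * n)) ∧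
  (∀ n : ℕ, ‖(D.B ω n).comp (D.Q ω)‖ ≤ D.K ω * exp (-D.lam * n)) ∧
  ∀ k : ℤ, D.K (σ.orbit ω k) ≤ W ω * exp (ε * k.natAbs) ∧
    W (σ.orbit ω k) ≤ exp (ε * k.natAbs) * W ω

def stablePart (g : Ω → X) (n : ℕ) (ω : Ω) : X :=
  𝒜 (σ.symm^[n] ω) n (D.P (σ.symm^[n] ω) (g (σ.symm^[n] ω)))

def unstablePart (g : Ω → X) (n : ℕ) (ω : Ω) : X :=
  D.B (σ^[n] ω) n (D.Q (σ^[n] ω) (g (σ^[n] ω)))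

noncomputable def solution (g : Ω → X) (ω : Ω) : X :=
  ∑' n, D.stablePart g n ω - ∑' n, D.unstablePart g (n + 1) ω

variable {D} {W : Ω → ℝ} {ε : ℝ} {ω : Ω}

lemma Regular.weight_pos (h : D.Regular W ε ω) : 0 < W ω := by
  simpa using (D.K_pos ω).trans_le (h.2.2 0).1

lemma ae_regular
    (hW : ∀ᵐ ω ∂μ, ∀ k : ℤ, D.K (σ.orbit ω k) ≤ W ω * exp (ε * k.natAbs) ∧
      W (σ.orbit ω k) ≤ exp (ε * k.natAbs) * W ω) :
    ∀ᵐ ω ∂μ, D.Regular W ε ω := by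
  filter_upwards [D.bound_s, D.bound_u, hW] with ω h₁ h₂ h₃ using ⟨h₁, h₂, h₃⟩

lemma norm_cocycle_P_le (hreg : ∀ k, D.Regular W ε (σ.orbit ω k)) (n : ℕ) (x : X) :
    ‖𝒜 (σ.symm^[n] ω) n (D.P (σ.symm^[n] ω) x)‖ ≤ W ω * exp (ε - D.lam) ^ n * ‖x‖ := by
  have h := (hreg (-n)).1 n
  simp only [σ.orbit_neg_natCast] at h
  exact ContinuousLinearMap.norm_apply_le_mul_exp_pow h (by simpa using ((hreg 0).2.2 (-n)).1) x

lemma norm_B_Q_le (hreg : ∀ k, D.Regular W ε (σ.orbit ω k)) (n : ℕ) (x : X) :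
    ‖D.B (σ^[n] ω) n (D.Q (σ^[n] ω) x)‖ ≤ W ω * exp (ε - D.lam) ^ n * ‖x‖ := by
  have h := (hreg n).2.1 n
  simp only [σ.orbit_natCast] at h
  exact ContinuousLinearMap.norm_apply_le_mul_exp_pow h (by simpa using ((hreg 0).2.2 n).1) x

variable {g : Ω → X} {M : ℝ}

lemma norm_stablePart_le (hreg : ∀ k, D.Regular W ε (σ.orbit ω k))
    (hg : ∀ k, ‖g (σ.orbit ω k)‖ ≤ M) (n : ℕ) :
    ‖D.stablePart g n ω‖ ≤ W ω * M * exp (ε - D.lam) ^ n := by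
  have hW := (hreg 0).weight_pos
  calc ‖D.stablePart g n ω‖ ≤ W ω * exp (ε - D.lam) ^ n * ‖g (σ.symm^[n] ω)‖ :=
        norm_cocycle_P_le hreg n _
    _ ≤ W ω * exp (ε - D.lam) ^ n * M := by gcongr; simpa using hg (-n)
    _ = W ω * M * exp (ε - D.lam) ^ n := by ring

lemma norm_unstablePart_le (hreg : ∀ k, D.Regular W ε (σ.orbit ω k))
    (hg : ∀ k, ‖g (σ.orbit ω k)‖ ≤ M) (n : ℕ) :
    ‖D.unstablePart g n ω‖ ≤ W ω * M * exp (ε - D.lam) ^ n := by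
  have hW := (hreg 0).weight_pos
  calc ‖D.unstablePart g n ω‖ ≤ W ω * exp (ε - D.lam) ^ n * ‖g (σ^[n] ω)‖ :=
        norm_B_Q_le hreg n _
    _ ≤ W ω * exp (ε - D.lam) ^ n * M := by gcongr; simpa using hg n
    _ = W ω * M * exp (ε - D.lam) ^ n := by ring

lemma summable_stablePart [CompleteSpace X] (hε : ε < D.lam)
    (hreg : ∀ k, D.Regular W ε (σ.orbit ω k))
    (hg : ∀ k, ‖g (σ.orbit ω k)‖ ≤ M) : Summable (D.stablePart g · ω) :=
  .of_norm_bounded ((summable_geometric_of_lt_one (exp_pos _).le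
    (exp_lt_one_iff.2 (by linarith))).mul_left _) (norm_stablePart_le hreg hg)

lemma summable_unstablePart [CompleteSpace X] (hε : ε < D.lam)
    (hreg : ∀ k, D.Regular W ε (σ.orbit ω k))
    (hg : ∀ k, ‖g (σ.orbit ω k)‖ ≤ M) : Summable (D.unstablePart g · ω) :=
  .of_norm_bounded ((summable_geometric_of_lt_one (exp_pos _).le
    (exp_lt_one_iff.2 (by linarith))).mul_left _) (norm_unstablePart_le hreg hg)

lemma norm_solution_le (hε : ε < D.lam) (hreg : ∀ k, D.Regular W ε (σ.orbit ω k))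
    (hg : ∀ k, ‖g (σ.orbit ω k)‖ ≤ M) :
    ‖D.solution g ω‖ ≤ W ω * (2 * M * (1 - exp (ε - D.lam))⁻¹) := by
  have hr : exp (ε - D.lam) < 1 := exp_lt_one_iff.2 (by linarith)
  have hgeom := (hasSum_geometric_of_lt_one (exp_pos _).le hr).mul_left (W ω * M)
  have hM : 0 ≤ W ω * M :=
    (norm_nonneg _).trans (by simpa using norm_stablePart_le hreg hg 0)
  have hs := tsum_of_norm_bounded hgeom (norm_stablePart_le hreg hg)
  have hu := tsum_of_norm_bounded hgeom fun n => (norm_unstablePart_le hreg hg (n + 1)).trans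
    (mul_le_mul_of_nonneg_left (pow_le_pow_of_le_one (exp_pos _).le hr.le n.le_succ) hM)
  calc ‖D.solution g ω‖ ≤ W ω * M * (1 - exp (ε - D.lam))⁻¹ +
        W ω * M * (1 - exp (ε - D.lam))⁻¹ := (norm_sub_le _ _).trans (add_le_add hs hu)
    _ = W ω * (2 * M * (1 - exp (ε - D.lam))⁻¹) := by ring

lemma stablePart_zero (hcoc : IsCocycle σ 𝒜) (g : Ω → X) (ω : Ω) :
    D.stablePart g 0 ω = D.P ω (g ω) := by
  simp [stablePart, hcoc.apply_zero]

lemma unstablePart_zero (hcoc : IsCocycle σ 𝒜) (g : Ω → X) (ω : Ω) :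
    D.unstablePart g 0 ω = D.Q ω (g ω) :=
  D.B_zero hcoc ω (g ω)

lemma cocycle_stablePart (hcoc : IsCocycle σ 𝒜) (g : Ω → X) (n : ℕ) (ω : Ω) :
    𝒜 (σ.symm ω) 1 (D.stablePart g n (σ.symm ω)) = D.stablePart g (n + 1) ω := by
  rw [stablePart, stablePart, iterate_succ_apply, hcoc.apply_succ (σ.symm^[n] (σ.symm ω)) n,
    σ.iterate_symm_iterate]

lemma cocycle_unstablePart (hcoc : IsCocycle σ 𝒜) (g : Ω → X) (n : ℕ) (ω : Ω) :
    𝒜 (σ.symm ω) 1 (D.unstablePart g (n + 1) (σ.symm ω)) = D.unstablePart g n ω := by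
  have h := D.cocycle_B_succ hcoc (σ^[n] ω) n (g (σ^[n] ω))
  rw [iterate_succ_apply', σ.symm_iterate_iterate] at h
  rwa [unstablePart, unstablePart, iterate_succ_apply, σ.apply_symm_apply]

lemma solution_sub_cocycle [CompleteSpace X] (hcoc : IsCocycle σ 𝒜) (hε : ε < D.lam)
    (hreg : ∀ k, D.Regular W ε (σ.orbit ω k)) (hg : ∀ k, ‖g (σ.orbit ω k)‖ ≤ M) :
    D.solution g ω - 𝒜 (σ.symm ω) 1 (D.solution g (σ.symm ω)) = g ω := by
  have hreg' : ∀ k, D.Regular W ε (σ.orbit (σ.symm ω) k) := by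
    simpa using σ.forall_orbit_orbit hreg (-1)
  have hg' : ∀ k, ‖g (σ.orbit (σ.symm ω) k)‖ ≤ M := by
    simpa using σ.forall_orbit_orbit (p := fun y => ‖g y‖ ≤ M) hg (-1)
  have hA : 𝒜 (σ.symm ω) 1 (D.solution g (σ.symm ω)) =
      ∑' n, D.stablePart g (n + 1) ω - ∑' n, D.unstablePart g n ω := by
    rw [solution, map_sub, ContinuousLinearMap.map_tsum _ (summable_stablePart hε hreg' hg'),
      ContinuousLinearMap.map_tsum _ ((summable_nat_add_iff 1).2
        (summable_unstablePart hε hreg' hg'))]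
    simp only [cocycle_stablePart hcoc, cocycle_unstablePart hcoc]
  rw [hA, solution, (summable_stablePart hε hreg hg).tsum_eq_zero_add,
    (summable_unstablePart hε hreg hg).tsum_eq_zero_add, stablePart_zero hcoc,
    unstablePart_zero hcoc]
  conv_rhs => rw [← D.P_add_Q ω (g ω)]
  abel

section Measurability

variable [SecondCountableTopology X]

lemma measurable_stablePart (hcoc : IsCocycle σ 𝒜) (hmeas : ∀ x, Measurable fun ω => 𝒜 ω 1 x)
    (hg : Measurable g) (n : ℕ) : Measurable (D.stablePart g n) :=
  (measurable_apply_of_continuous_of_measurable (fun ω => (𝒜 ω n).continuous)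
    (hcoc.measurable_apply σ.measurable hmeas n) <|
    measurable_apply_of_continuous_of_measurable (fun ω => (D.P ω).continuous) D.P_meas hg).comp
    (σ.symm.measurable.iterate n)

/-- The unstable terms are measurable although `B` is not assumed to be: `unstablePart g n ω`
is the unique `y` with `P ω y = 0` and `𝒜 ω n y = Q g(σⁿω)`. -/
lemma measurable_unstablePart (hcoc : IsCocycle σ 𝒜)
    (hmeas : ∀ x, Measurable fun ω => 𝒜 ω 1 x) (hg : Measurable g) (n : ℕ) :
    Measurable (D.unstablePart g n) := by
  refine measurable_of_apply_eq_of_antilipschitz (T := fun ω => (D.P ω).prod (𝒜 ω n))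
    (fun ω => ContinuousLinearMap.continuous _)
    (fun x => (D.P_meas x).prodMk (hcoc.measurable_apply σ.measurable hmeas n x))
    (fun ω => ⟨_, ContinuousLinearMap.antilipschitz_of_bound _ (K := 1 +
      ‖(D.B (σ^[n] ω) n).comp (D.Q (σ^[n] ω))‖₊) fun x => ?_⟩)
    (v := fun ω => (0, D.Q (σ^[n] ω) (g (σ^[n] ω))))
    (measurable_const.prodMk ?_) fun ω => ?_
  · have hP := norm_fst_le (D.P ω x, 𝒜 ω n x)
    have hA := norm_snd_le (D.P ω x, 𝒜 ω n x)
    have := D.norm_le_P_add_B_Q hcoc ω n x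
    push_cast
    nlinarith [norm_nonneg ((D.B (σ^[n] ω) n).comp (D.Q (σ^[n] ω)))]
  · have hgn := hg.comp (σ.measurable.iterate n)
    exact hgn.sub (measurable_apply_of_continuous_of_measurable (u := fun ω => D.P (σ^[n] ω))
      (fun ω => (D.P _).continuous)
      (fun x => (D.P_meas x).comp (σ.measurable.iterate n)) hgn)
  · have hP := D.P_B (σ^[n] ω) n (g (σ^[n] ω))
    have hA := D.cocycle_B (σ^[n] ω) n (g (σ^[n] ω))
    rw [σ.symm_iterate_iterate] at hP hA
    simp [unstablePart, hP, hA]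

lemma aemeasurable_solution [CompleteSpace X] (hcoc : IsCocycle σ 𝒜)
    (hmeas : ∀ x, Measurable fun ω => 𝒜 ω 1 x) (hg : Measurable g) (hε : ε < D.lam)
    (hgood : ∀ᵐ ω ∂μ, (∀ k, D.Regular W ε (σ.orbit ω k)) ∧ ∀ k, ‖g (σ.orbit ω k)‖ ≤ M) :
    AEMeasurable (D.solution g) μ := by
  refine aemeasurable_of_tendsto_metrizable_ae' (fun N => Measurable.aemeasurable <|
    (Finset.measurable_sum (Finset.range N) fun k _ => D.measurable_stablePart hcoc hmeas hg k).sub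
    (Finset.measurable_sum (Finset.range N) fun k _ =>
      D.measurable_unstablePart hcoc hmeas hg (k + 1))) ?_
  filter_upwards [hgood] with ω ⟨hreg, hgω⟩
  exact (summable_stablePart hε hreg hgω).hasSum.tendsto_sum_nat.sub
    ((summable_nat_add_iff 1).2 (summable_unstablePart hε hreg hgω)).hasSum.tendsto_sum_nat

end Measurability

lemma norm_le_of_forall_orbit (hcoc : IsCocycle σ 𝒜) (hreg : ∀ k, D.Regular W ε (σ.orbit ω k))
    {h : Ω → X} (hinv : ∀ k, h (σ (σ.orbit ω k)) = 𝒜 (σ.orbit ω k) 1 (h (σ.orbit ω k)))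
    (hbd : ∀ k, ‖h (σ.orbit ω k)‖ ≤ W (σ.orbit ω k) * M) (n : ℕ) :
    ‖h ω‖ ≤ 2 * (W ω ^ 2 * M) * exp (2 * ε - D.lam) ^ n := by
  have hω : D.Regular W ε ω := by simpa using hreg 0
  have hW := hω.weight_pos
  have hM : 0 ≤ M := nonneg_of_mul_nonneg_right ((norm_nonneg _).trans (by simpa using hbd 0)) hW
  have horbit : ∀ k : ℤ, ‖h (σ.orbit ω k)‖ ≤ exp (ε * k.natAbs) * (W ω * M) := fun k => by
    rw [← mul_assoc]; exact (hbd k).trans (by gcongr; exact (hω.2.2 k).2)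
  have hexp : W ω * exp (ε - D.lam) ^ n * (exp (ε * n) * (W ω * M)) =
      W ω ^ 2 * M * exp (2 * ε - D.lam) ^ n := by
    rw [← exp_nat_mul, ← exp_nat_mul, mul_comm (n : ℝ) (2 * ε - D.lam),
      show (2 * ε - D.lam) * n = ε * n + n * (ε - D.lam) by ring, exp_add]
    ring
  have hback := hcoc.iterate_apply_of_forall_orbit hinv (-n) n
  have hfwd := hcoc.iterate_apply_of_forall_orbit hinv 0 n
  simp only [σ.orbit_neg_natCast, σ.iterate_symm_iterate, σ.orbit_zero] at hback hfwd
  have hP : ‖D.P ω (h ω)‖ ≤ W ω ^ 2 * M * exp (2 * ε - D.lam) ^ n := by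
    calc ‖D.P ω (h ω)‖ = ‖𝒜 (σ.symm^[n] ω) n (D.P (σ.symm^[n] ω) (h (σ.symm^[n] ω)))‖ := by
          rw [← D.P_cocycle hcoc, σ.iterate_symm_iterate, ← hback]
      _ ≤ W ω * exp (ε - D.lam) ^ n * ‖h (σ.symm^[n] ω)‖ := norm_cocycle_P_le hreg n _
      _ ≤ _ := by rw [← hexp]; gcongr; simpa using horbit (-n)
  have hQ : ‖D.Q ω (h ω)‖ ≤ W ω ^ 2 * M * exp (2 * ε - D.lam) ^ n := by
    calc ‖D.Q ω (h ω)‖ = ‖D.B (σ^[n] ω) n (D.Q (σ^[n] ω) (h (σ^[n] ω)))‖ := by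
          rw [hfwd, D.B_Q_cocycle hcoc]
      _ ≤ W ω * exp (ε - D.lam) ^ n * ‖h (σ^[n] ω)‖ := norm_B_Q_le hreg n _
      _ ≤ _ := by rw [← hexp]; gcongr; simpa using horbit n
  calc ‖h ω‖ = ‖D.P ω (h ω) + D.Q ω (h ω)‖ := by rw [D.P_add_Q]
    _ ≤ 2 * (W ω ^ 2 * M) * exp (2 * ε - D.lam) ^ n := by
        rw [two_mul, add_mul]; exact norm_add_le_of_le hP hQ

lemma eq_zero_of_forall_orbit (hcoc : IsCocycle σ 𝒜) (hε : 2 * ε < D.lam)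
    (hreg : ∀ k, D.Regular W ε (σ.orbit ω k)) {h : Ω → X}
    (hinv : ∀ k, h (σ (σ.orbit ω k)) = 𝒜 (σ.orbit ω k) 1 (h (σ.orbit ω k)))
    (hbd : ∀ k, ‖h (σ.orbit ω k)‖ ≤ W (σ.orbit ω k) * M) : h ω = 0 := by
  have hlim : Tendsto (fun n : ℕ => 2 * (W ω ^ 2 * M) * exp (2 * ε - D.lam) ^ n)
      atTop (nhds 0) := by
    simpa using (tendsto_pow_atTop_nhds_zero_of_lt_one (exp_pos _).le
      (exp_lt_one_iff.2 (by linarith))).const_mul (2 * (W ω ^ 2 * M))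
  exact norm_le_zero_iff.1 (ge_of_tendsto' hlim (norm_le_of_forall_orbit hcoc hreg hinv hbd))

lemma ae_eq_zero_of_cocycle_invariant (hσ : MeasurePreserving σ μ μ) (hcoc : IsCocycle σ 𝒜)
    (hε : 2 * ε < D.lam) (hreg : ∀ᵐ ω ∂μ, D.Regular W ε ω) {h : Ω → X}
    (hinv : ∀ᵐ ω ∂μ, h ω = 𝒜 (σ.symm ω) 1 (h (σ.symm ω)))
    (hbd : ∀ᵐ ω ∂μ, ‖h ω‖ ≤ W ω * M) : h =ᵐ[μ] 0 := by
  have hinv' : ∀ᵐ ω ∂μ, h (σ ω) = 𝒜 ω 1 (h ω) := by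
    filter_upwards [hσ.quasiMeasurePreserving.ae hinv] with ω hω
    simpa using hω
  filter_upwards [σ.ae_forall_orbit hσ hreg, σ.ae_forall_orbit hσ hinv',
    σ.ae_forall_orbit hσ hbd] with ω h₁ h₂ h₃ using eq_zero_of_forall_orbit hcoc hε h₁ h₂ h₃

lemma exists_solution [CompleteSpace X] [SecondCountableTopology X]
    (hσ : MeasurePreserving σ μ μ) (hcoc : IsCocycle σ 𝒜)
    (hmeas : ∀ x, Measurable fun ω => 𝒜 ω 1 x) (hε : ε < D.lam)
    (hreg : ∀ᵐ ω ∂μ, D.Regular W ε ω) (hg : Measurable g) (hgM : ∀ᵐ ω ∂μ, ‖g ω‖ ≤ M) :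
    ∃ f : Ω → X, (Measurable f ∧ ∃ M', ∀ᵐ ω ∂μ, ‖f ω‖ ≤ W ω * M') ∧
      ∀ᵐ ω ∂μ, f ω - 𝒜 (σ.symm ω) 1 (f (σ.symm ω)) = g ω := by
  have hgood := σ.ae_forall_orbit hσ (hreg.and hgM)
  simp only [forall_and] at hgood
  have hF := aemeasurable_solution hcoc hmeas hg hε hgood
  refine ⟨hF.mk _, ⟨hF.measurable_mk, 2 * M * (1 - exp (ε - D.lam))⁻¹, ?_⟩, ?_⟩
  · filter_upwards [hgood, hF.ae_eq_mk] with ω ⟨hreg, hgω⟩ hω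
    exact hω ▸ norm_solution_le hε hreg hgω
  · filter_upwards [hgood, hF.ae_eq_mk, (hσ.symm σ).quasiMeasurePreserving.ae hF.ae_eq_mk]
      with ω ⟨hreg, hgω⟩ hω hω'
    rw [← hω, ← hω']
    exact solution_sub_cocycle hcoc hε hreg hgω

theorem admissible [CompleteSpace X] [SecondCountableTopology X]
    (hσ : MeasurePreserving σ μ μ) (hcoc : IsCocycle σ 𝒜)
    (hmeas : ∀ x, Measurable fun ω => 𝒜 ω 1 x) (hε : 2 * ε < D.lam)
    (hW : ∀ᵐ ω ∂μ, ∀ k : ℤ, D.K (σ.orbit ω k) ≤ W ω * exp (ε * k.natAbs) ∧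
      W (σ.orbit ω k) ≤ exp (ε * k.natAbs) * W ω) :
    Admissible μ σ (fun ω => 𝒜 ω 1) (fun ω => (W ω)⁻¹) (fun _ => 1) := by
  have hreg := ae_regular hW
  have hmem (f : Ω → X) := memLinfW_inv_iff (hreg.mono fun _ h => h.weight_pos) (f := f)
  rintro g ⟨hg, M, hgM⟩
  obtain ⟨f, hf, hfeq⟩ := exists_solution hσ hcoc hmeas (by linarith [D.lam_pos]) hreg hg
    (by simpa using hgM)
  refine ⟨f, ⟨(hmem f).2 hf, hfeq⟩, fun f' ⟨hf', hf'eq⟩ => ?_⟩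
  obtain ⟨-, M₁, hM₁⟩ := (hmem f').1 hf'
  obtain ⟨-, M₂, hM₂⟩ := hf
  have hinv : ∀ᵐ ω ∂μ, (f' - f) ω = 𝒜 (σ.symm ω) 1 ((f' - f) (σ.symm ω)) := by
    filter_upwards [hf'eq, hfeq] with ω h₁ h₂
    rw [Pi.sub_apply, Pi.sub_apply, map_sub, sub_eq_sub_iff_sub_eq_sub, h₁, h₂]
  have hbd : ∀ᵐ ω ∂μ, ‖(f' - f) ω‖ ≤ W ω * (M₁ + M₂) := by
    filter_upwards [hM₁, hM₂] with ω h₁ h₂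
    rw [mul_add]
    exact norm_sub_le_of_le h₁ h₂
  filter_upwards [ae_eq_zero_of_cocycle_invariant hσ hcoc hε hreg hinv hbd] with ω hω
  exact sub_eq_zero.1 hω

end Dichotomy

theorem stmt_10_general {Ω X : Type*} [MeasurableSpace Ω]
    [NormedAddCommGroup X] [NormedSpace ℝ X] [CompleteSpace X]
    [MeasurableSpace X] [BorelSpace X] [TopologicalSpace.SeparableSpace X]
    (μ : Measure Ω) (σ : Ω ≃ᵐ Ω)
    (hσ : MeasurePreserving σ μ μ)
    (𝒜 : Ω → ℕ → X →L[ℝ] X) (hcoc : IsCocycle (⇑σ) 𝒜)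
    (hmeas : ∀ x : X, Measurable fun ω => 𝒜 ω 1 x)
    (D : Dichotomy μ σ 𝒜) :
    ∃ C : Ω → ℝ, Measurable C ∧ (∀ ω, 0 < C ω) ∧ Tempered μ σ C ∧
      Admissible μ σ (fun ω => 𝒜 ω 1) C (fun _ => 1) := by
  have : SecondCountableTopology X := UniformSpace.secondCountable_of_separable X
  have hK : Tempered μ σ D.K := by
    filter_upwards [D.tempered_pos, D.tempered_neg] with ω h₁ h₂ using ⟨h₁, h₂⟩
  obtain ⟨W, hWm, hW1, hWt, hW⟩ :=
    exists_tempered_majorant D.K_pos D.K_meas hK (by linarith [D.lam_pos] : 0 < D.lam / 3)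
  exact ⟨fun ω => (W ω)⁻¹, hWm.inv, fun ω => inv_pos.2 (one_pos.trans_le (hW1 ω)), hWt.inv,
    D.admissible hσ hcoc hmeas (by linarith [D.lam_pos]) hW⟩

/-- If a linear cocycle admits a tempered exponential dichotomy, then
there is a tempered random variable `C > 0` such that the pair
`(L^∞_C(Ω,X), L^∞(Ω,X))` is admissible for the cocycle. -/
theorem stmt_10 {Ω X : Type*} [MeasurableSpace Ω]
    [NormedAddCommGroup X] [NormedSpace ℝ X] [CompleteSpace X]
    [MeasurableSpace X] [BorelSpace X] [TopologicalSpace.SeparableSpace X]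
    (μ : Measure Ω) [IsProbabilityMeasure μ] (σ : Ω ≃ᵐ Ω)
    (hσ : MeasurePreserving σ μ μ) (herg : Ergodic (⇑σ) μ)
    (𝒜 : Ω → ℕ → X →L[ℝ] X) (hcoc : IsCocycle (⇑σ) 𝒜)
    (hmeas : ∀ x : X, Measurable fun ω => 𝒜 ω 1 x)
    (D : Dichotomy μ σ 𝒜) :
    ∃ C : Ω → ℝ, Measurable C ∧ (∀ ω, 0 < C ω) ∧ Tempered μ σ C ∧
      Admissible μ σ (fun ω => 𝒜 ω 1) C (fun _ => 1) :=
  stmt_10_general μ σ hσ 𝒜 hcoc hmeas D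
end

section
/- Let 𝒜 be a linear cocycle admitting a tempered exponential dichotomy with constant K and rate λ > 0. Choose d > 0 with d·(1+e^{-λ})/(1−e^{-λ}) < 1 and set c(ω) := d/K(σω). For any cocycle generator B with ‖A(ω) − B(ω)‖ ≤ c(ω) ℙ-a.e., and any g ∈ L^∞_K(Ω,X), the map T on L^∞(Ω,X) defined by (Tf)(ω) = Σ_{n=0}^∞ 𝒜(σ^{-n}ω,n)Π^s(σ^{-n}ω)((B−A)(σ^{-(n+1)}ω)f(σ^{-(n+1)}ω) + g(σ^{-n}ω)) − Σ_{n=1}^∞ 𝒜(σ^n ω,−n)Π^u(σ^n ω)((B−A)(σ^{n-1}ω)f(σ^{n-1}ω) + g(σ^n ω)) is a well-defined contraction on L^∞(Ω,X) with Lipschitz constant d·(1+e^{-λ})/(1−e^{-λ}) < 1. -/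
open MeasureTheory Filter

/-!
Every term of the two series is a dichotomy operator applied to the forcing `(B − A) f + g`,
taken one step apart along the orbit. The perturbation bound `‖A − B‖ ≤ d / K(σ ·)` is evaluated
exactly at the point whose tempered constant `K` enters the dichotomy estimate, so the constants
cancel and the `n`-th terms are bounded by `(d ‖f‖_∞ + ‖g‖_K) e^{-λn}` and
`(d ‖f‖_∞ + ‖g‖_K) e^{-λ(n+1)}`; the two geometric series sum to `(1 + e^{-λ}) / (1 − e^{-λ})`.
The terms are affine in `f`, so the Lipschitz estimate is the same bound for `f₁ − f₂` and `g = 0`.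
-/

section NormBounds

variable {𝕜 E F : Type*} [NontriviallyNormedField 𝕜] [NormedAddCommGroup E] [NormedSpace 𝕜 E]
  [NormedAddCommGroup F] [NormedSpace 𝕜 F]

lemma ContinuousLinearMap.norm_apply_le_of_norm_le_mul {S : E →L[𝕜] F} {x : E} {κ ρ M : ℝ}
    (hS : ‖S‖ ≤ κ * ρ) (hρ : 0 ≤ ρ) (hx : κ * ‖x‖ ≤ M) : ‖S x‖ ≤ M * ρ :=
  calc ‖S x‖ ≤ κ * ρ * ‖x‖ := S.le_of_opNorm_le hS x
    _ = ρ * (κ * ‖x‖) := by ring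
    _ ≤ ρ * M := by gcongr
    _ = M * ρ := mul_comm _ _

lemma ContinuousLinearMap.mul_norm_apply_add_le {Δ : E →L[𝕜] F} {x : E} {y : F}
    {κ d Mx My : ℝ} (hκ : 0 < κ) (hΔ : ‖Δ‖ ≤ d / κ) (hx : ‖x‖ ≤ Mx) (hy : κ * ‖y‖ ≤ My) :
    κ * ‖Δ x + y‖ ≤ d * Mx + My := by
  have hΔx : ‖Δ x‖ ≤ d / κ * Mx :=
    (Δ.le_of_opNorm_le hΔ x).trans (mul_le_mul_of_nonneg_left hx ((norm_nonneg _).trans hΔ))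
  calc κ * ‖Δ x + y‖ ≤ κ * (d / κ * Mx + ‖y‖) := by
        gcongr
        exact (norm_add_le _ _).trans (add_le_add_left hΔx _)
    _ = d * Mx + κ * ‖y‖ := by field_simp
    _ ≤ d * Mx + My := by gcongr

end NormBounds

lemma norm_tsum_sub_tsum_le_of_norm_sub_le {ι E : Type*} [NormedAddCommGroup E] [CompleteSpace E]
    {f g : ι → E} {b : ι → ℝ} {a : ℝ} (hb : HasSum b a) (h : ∀ i, ‖f i - g i‖ ≤ b i) :
    ‖∑' i, f i - ∑' i, g i‖ ≤ a := by
  have hfg : Summable f ↔ Summable g :=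
    summable_iff_of_summable_sub (hb.summable.of_norm_bounded h)
  by_cases hf : Summable f
  · rw [← hf.tsum_sub (hfg.1 hf)]
    exact tsum_of_norm_bounded hb h
  · rw [tsum_eq_zero_of_not_summable hf, tsum_eq_zero_of_not_summable (mt hfg.2 hf), sub_zero,
      norm_zero]
    exact hb.nonneg fun i => (norm_nonneg _).trans (h i)

lemma hasSum_exp_neg_mul_nat {lam : ℝ} (hlam : 0 < lam) :
    HasSum (fun n : ℕ => Real.exp (-lam * n)) (1 - Real.exp (-lam))⁻¹ := by
  convert hasSum_geometric_of_lt_one (Real.exp_pos (-lam)).le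
    (Real.exp_lt_one_iff.2 (neg_neg_of_pos hlam)) using 1
  funext n
  rw [← Real.exp_nat_mul, mul_comm]

lemma hasSum_exp_neg_mul_nat_succ {lam : ℝ} (hlam : 0 < lam) :
    HasSum (fun n : ℕ => Real.exp (-lam * ↑(n + 1)))
      (Real.exp (-lam) * (1 - Real.exp (-lam))⁻¹) := by
  have hterm (n : ℕ) : Real.exp (-lam) * Real.exp (-lam * n) = Real.exp (-lam * ↑(n + 1)) := by
    rw [← Real.exp_add]
    push_cast
    ring_nf
  simpa only [hterm] using (hasSum_exp_neg_mul_nat hlam).mul_left (Real.exp (-lam))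

lemma MeasureTheory.MeasurePreserving.ae_forall_iterate {α : Type*} [MeasurableSpace α]
    {μ : Measure α} {f : α → α} (hf : MeasurePreserving f μ μ) {p : α → Prop}
    (hp : ∀ᵐ x ∂μ, p x) : ∀ᵐ x ∂μ, ∀ n, p (f^[n] x) :=
  ae_all_iff.2 fun n => (hf.iterate n).quasiMeasurePreserving.ae hp

namespace Dichotomy

variable {Ω X : Type*} [MeasurableSpace Ω] [NormedAddCommGroup X] [NormedSpace ℝ X]
  [MeasurableSpace X] [BorelSpace X] {μ : Measure Ω} {σ : Ω ≃ᵐ Ω} {𝒜 : Ω → ℕ → X →L[ℝ] X}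

def stableTerm (D : Dichotomy μ σ 𝒜) (Bgen : Ω → X →L[ℝ] X) (f g : Ω → X) (ω : Ω) (n : ℕ) :
    X :=
  𝒜 (σ.symm^[n] ω) n (D.P (σ.symm^[n] ω)
    ((Bgen (σ.symm^[n + 1] ω) - 𝒜 (σ.symm^[n + 1] ω) 1) (f (σ.symm^[n + 1] ω)) +
      g (σ.symm^[n] ω)))

-- The `n`-th term is the paper's `(n + 1)`-st term of the unstable series.
def unstableTerm (D : Dichotomy μ σ 𝒜) (Bgen : Ω → X →L[ℝ] X) (f g : Ω → X) (ω : Ω) (n : ℕ) :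
    X :=
  D.B (σ^[n + 1] ω) (n + 1) ((ContinuousLinearMap.id ℝ X - D.P (σ^[n + 1] ω))
    ((Bgen (σ^[n] ω) - 𝒜 (σ^[n] ω) 1) (f (σ^[n] ω)) + g (σ^[n + 1] ω)))

variable (D : Dichotomy μ σ 𝒜) (Bgen : Ω → X →L[ℝ] X)

lemma stableTerm_sub (f₁ f₂ g : Ω → X) (ω : Ω) (n : ℕ) :
    D.stableTerm Bgen f₁ g ω n - D.stableTerm Bgen f₂ g ω n =
      D.stableTerm Bgen (f₁ - f₂) 0 ω n := by
  simp only [stableTerm, Pi.sub_apply, Pi.zero_apply, add_zero, ← map_sub,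
    add_sub_add_right_eq_sub]

lemma unstableTerm_sub (f₁ f₂ g : Ω → X) (ω : Ω) (n : ℕ) :
    D.unstableTerm Bgen f₁ g ω n - D.unstableTerm Bgen f₂ g ω n =
      D.unstableTerm Bgen (f₁ - f₂) 0 ω n := by
  simp only [unstableTerm, Pi.sub_apply, Pi.zero_apply, add_zero, ← map_sub,
    add_sub_add_right_eq_sub]

variable {D Bgen} {d Mf Mg : ℝ} {f g : Ω → X}

lemma ae_norm_stableTerm_le (hσ : MeasurePreserving σ μ μ)
    (hB : ∀ᵐ ω ∂μ, ‖𝒜 ω 1 - Bgen ω‖ ≤ d / D.K (σ ω)) (hf : ∀ᵐ ω ∂μ, ‖f ω‖ ≤ Mf)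
    (hg : ∀ᵐ ω ∂μ, D.K ω * ‖g ω‖ ≤ Mg) :
    ∀ᵐ ω ∂μ, ∀ n : ℕ, ‖D.stableTerm Bgen f g ω n‖ ≤ (d * Mf + Mg) * Real.exp (-D.lam * n) := by
  filter_upwards [(hσ.symm σ).ae_forall_iterate (D.bound_s.and (hB.and (hf.and hg)))]
    with ω hω n
  obtain ⟨hS, -, -, hgn⟩ := hω n
  obtain ⟨-, hBn, hfn, -⟩ := hω (n + 1)
  have hσn : σ (σ.symm^[n + 1] ω) = σ.symm^[n] ω := by
    rw [Function.iterate_succ_apply', σ.apply_symm_apply]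
  rw [hσn, norm_sub_rev] at hBn
  have hforcing := ContinuousLinearMap.mul_norm_apply_add_le (D.K_pos _) hBn hfn hgn
  exact ContinuousLinearMap.norm_apply_le_of_norm_le_mul (S := (𝒜 _ n).comp (D.P _)) (hS n)
    (Real.exp_pos _).le hforcing

lemma ae_norm_unstableTerm_le (hσ : MeasurePreserving σ μ μ)
    (hB : ∀ᵐ ω ∂μ, ‖𝒜 ω 1 - Bgen ω‖ ≤ d / D.K (σ ω)) (hf : ∀ᵐ ω ∂μ, ‖f ω‖ ≤ Mf)
    (hg : ∀ᵐ ω ∂μ, D.K ω * ‖g ω‖ ≤ Mg) :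
    ∀ᵐ ω ∂μ, ∀ n : ℕ,
      ‖D.unstableTerm Bgen f g ω n‖ ≤ (d * Mf + Mg) * Real.exp (-D.lam * ↑(n + 1)) := by
  filter_upwards [hσ.ae_forall_iterate (D.bound_u.and (hB.and (hf.and hg)))] with ω hω n
  obtain ⟨-, hBn, hfn, -⟩ := hω n
  obtain ⟨hS, -, -, hgn⟩ := hω (n + 1)
  rw [← Function.iterate_succ_apply' σ, norm_sub_rev] at hBn
  have hforcing := ContinuousLinearMap.mul_norm_apply_add_le (D.K_pos _) hBn hfn hgn
  exact ContinuousLinearMap.norm_apply_le_of_norm_le_mul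
    (S := (D.B _ (n + 1)).comp (ContinuousLinearMap.id ℝ X - D.P _)) (hS (n + 1))
    (Real.exp_pos _).le hforcing

end Dichotomy

theorem stmt_16_general {Ω X : Type*} [MeasurableSpace Ω]
    [NormedAddCommGroup X] [NormedSpace ℝ X] [CompleteSpace X]
    [MeasurableSpace X] [BorelSpace X]
    (μ : Measure Ω) (σ : Ω ≃ᵐ Ω)
    (hσ : MeasurePreserving σ μ μ)
    (𝒜 : Ω → ℕ → X →L[ℝ] X)
    (D : Dichotomy μ σ 𝒜)
    (d : ℝ)
    (Bgen : Ω → X →L[ℝ] X)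
    (hB : ∀ᵐ ω ∂μ, ‖𝒜 ω 1 - Bgen ω‖ ≤ d / D.K (σ ω))
    (g : Ω → X) (Mg : ℝ)
    (hg : ∀ᵐ ω ∂μ, D.K ω * ‖g ω‖ ≤ Mg)
    (T : (Ω → X) → Ω → X)
    (hT : ∀ f ω, T f ω =
      (∑' n : ℕ, 𝒜 (σ.symm^[n] ω) n (D.P (σ.symm^[n] ω)
          ((Bgen (σ.symm^[n + 1] ω) - 𝒜 (σ.symm^[n + 1] ω) 1) (f (σ.symm^[n + 1] ω)) +
            g (σ.symm^[n] ω)))) -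
        ∑' n : ℕ, D.B (σ^[n + 1] ω) (n + 1)
          ((ContinuousLinearMap.id ℝ X - D.P (σ^[n + 1] ω))
            ((Bgen (σ^[n] ω) - 𝒜 (σ^[n] ω) 1) (f (σ^[n] ω)) + g (σ^[n + 1] ω)))) :
    (∀ f : Ω → X, ∀ Mf : ℝ, (∀ᵐ ω ∂μ, ‖f ω‖ ≤ Mf) →
        ∀ᵐ ω ∂μ, ‖T f ω‖ ≤
          ((1 + Real.exp (-D.lam)) / (1 - Real.exp (-D.lam))) * (d * Mf + Mg)) ∧
      ∀ f₁ f₂ : Ω → X, ∀ M12 : ℝ, (∀ᵐ ω ∂μ, ‖f₁ ω - f₂ ω‖ ≤ M12) →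
        ∀ᵐ ω ∂μ, ‖T f₁ ω - T f₂ ω‖ ≤
          d * ((1 + Real.exp (-D.lam)) / (1 - Real.exp (-D.lam))) * M12 := by
  set r := Real.exp (-D.lam)
  have hs := hasSum_exp_neg_mul_nat D.lam_pos
  have hu := hasSum_exp_neg_mul_nat_succ D.lam_pos
  refine ⟨fun f Mf hf => ?_, fun f₁ f₂ M12 hf₁₂ => ?_⟩
  · filter_upwards [D.ae_norm_stableTerm_le hσ hB hf hg,
      D.ae_norm_unstableTerm_le hσ hB hf hg] with ω hsω huω
    rw [hT]
    calc _ ≤ ‖∑' n, D.stableTerm Bgen f g ω n‖ + ‖∑' n, D.unstableTerm Bgen f g ω n‖ :=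
          norm_sub_le _ _
      _ ≤ (d * Mf + Mg) * (1 - r)⁻¹ + (d * Mf + Mg) * (r * (1 - r)⁻¹) :=
          add_le_add (tsum_of_norm_bounded (hs.mul_left _) hsω)
          (tsum_of_norm_bounded (hu.mul_left _) huω)
      _ = _ := by ring
  · have hzero : ∀ᵐ ω ∂μ, D.K ω * ‖(0 : Ω → X) ω‖ ≤ 0 := ae_of_all _ fun ω => by simp
    filter_upwards [D.ae_norm_stableTerm_le (f := f₁ - f₂) hσ hB hf₁₂ hzero,
      D.ae_norm_unstableTerm_le (f := f₁ - f₂) hσ hB hf₁₂ hzero] with ω hsω huω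
    rw [hT, hT, sub_sub_sub_comm]
    calc _ ≤ ‖∑' n, D.stableTerm Bgen f₁ g ω n - ∑' n, D.stableTerm Bgen f₂ g ω n‖ +
          ‖∑' n, D.unstableTerm Bgen f₁ g ω n - ∑' n, D.unstableTerm Bgen f₂ g ω n‖ :=
          norm_sub_le _ _
      _ ≤ (d * M12 + 0) * (1 - r)⁻¹ + (d * M12 + 0) * (r * (1 - r)⁻¹) := add_le_add
          (norm_tsum_sub_tsum_le_of_norm_sub_le (hs.mul_left _)
            fun n => by rw [D.stableTerm_sub]; exact hsω n)
          (norm_tsum_sub_tsum_le_of_norm_sub_le (hu.mul_left _)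
            fun n => by rw [D.unstableTerm_sub]; exact huω n)
      _ = _ := by ring

/-- Under a tempered exponential dichotomy and for a perturbed
generator `B` with `‖A(ω) − B(ω)‖ ≤ d / K(σω)` a.e. (where
`d (1+e^{-λ})/(1−e^{-λ}) < 1`), the operator `T` defined by the dichotomy series is a
well-defined contraction on `L^∞(Ω,X)` with Lipschitz constant
`d (1+e^{-λ})/(1−e^{-λ}) < 1`. -/
theorem stmt_16 {Ω X : Type*} [MeasurableSpace Ω]
    [NormedAddCommGroup X] [NormedSpace ℝ X] [CompleteSpace X]
    [MeasurableSpace X] [BorelSpace X]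
    (μ : Measure Ω) [IsProbabilityMeasure μ] (σ : Ω ≃ᵐ Ω)
    (hσ : MeasurePreserving σ μ μ) (herg : Ergodic (⇑σ) μ)
    (𝒜 : Ω → ℕ → X →L[ℝ] X) (hcoc : IsCocycle (⇑σ) 𝒜)
    (D : Dichotomy μ σ 𝒜)
    (d : ℝ) (hd0 : 0 < d)
    (hd : d * ((1 + Real.exp (-D.lam)) / (1 - Real.exp (-D.lam))) < 1)
    (Bgen : Ω → X →L[ℝ] X)
    (hB : ∀ᵐ ω ∂μ, ‖𝒜 ω 1 - Bgen ω‖ ≤ d / D.K (σ ω))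
    (g : Ω → X) (hgmeas : Measurable g) (Mg : ℝ)
    (hg : ∀ᵐ ω ∂μ, D.K ω * ‖g ω‖ ≤ Mg)
    (T : (Ω → X) → Ω → X)
    (hT : ∀ f ω, T f ω =
      (∑' n : ℕ, 𝒜 (σ.symm^[n] ω) n (D.P (σ.symm^[n] ω)
          ((Bgen (σ.symm^[n + 1] ω) - 𝒜 (σ.symm^[n + 1] ω) 1) (f (σ.symm^[n + 1] ω)) +
            g (σ.symm^[n] ω)))) -
        ∑' n : ℕ, D.B (σ^[n + 1] ω) (n + 1)
          ((ContinuousLinearMap.id ℝ X - D.P (σ^[n + 1] ω))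
            ((Bgen (σ^[n] ω) - 𝒜 (σ^[n] ω) 1) (f (σ^[n] ω)) + g (σ^[n + 1] ω)))) :
    (∀ f : Ω → X, ∀ Mf : ℝ, (∀ᵐ ω ∂μ, ‖f ω‖ ≤ Mf) →
        ∀ᵐ ω ∂μ, ‖T f ω‖ ≤
          ((1 + Real.exp (-D.lam)) / (1 - Real.exp (-D.lam))) * (d * Mf + Mg)) ∧
      ∀ f₁ f₂ : Ω → X, ∀ M12 : ℝ, (∀ᵐ ω ∂μ, ‖f₁ ω - f₂ ω‖ ≤ M12) →
        ∀ᵐ ω ∂μ, ‖T f₁ ω - T f₂ ω‖ ≤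
          d * ((1 + Real.exp (-D.lam)) / (1 - Real.exp (-D.lam))) * M12 :=
  stmt_16_general μ σ hσ 𝒜 D d Bgen hB g Mg hg T hT
end
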